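/- For every n ≥ 5, h_n ≠ 0. -/

import Mathlib

def t (n : ℕ) : ℤ := (-1) ^ ((Nat.digits 2 n).sum)

def h : ℕ → ℤ
  | 0 => 0
  | 1 => 1
  | (n + 2) => t (n + 2) * h (n + 1) + h n

/-!
Since `t (2n) = t n` and `t (2n+1) = -t n`, two steps of the recurrence collapse to
`h (2n+3) = -t (n+1) * h (2n)`, so it suffices that `h (2n) < 0` for `n ≥ 1`.
Eliminating the odd terms gives `h (2n+4) = h (2n+2) - t (n+1) t (n+2) h (2n)`, whose coefficient
is `-1` for odd `n` and `±1` for even `n`. For `a = h (4m)`, `b = h (4m+2)` this means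
`h (4m+4) = b ± a ≤ b - a` and `h (4m+6) = h (4m+4) + b`, so the invariant `b < a ≤ 0` propagates.
-/

lemma t_two_mul (n : ℕ) : t (2 * n) = t n := by
  rcases Nat.eq_zero_or_pos n with rfl | hn
  · rfl
  · rw [t, t, ← zero_add (2 * n), Nat.digits_add 2 one_lt_two 0 n two_pos (Or.inr hn.ne'),
      List.sum_cons, zero_add]

lemma t_two_mul_add_one (n : ℕ) : t (2 * n + 1) = -t n := by
  rw [t, t, add_comm, Nat.digits_add 2 one_lt_two 1 n one_lt_two (Or.inl one_ne_zero),
    List.sum_cons, pow_add, pow_one, neg_one_mul]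

lemma t_mul_self (n : ℕ) : t n * t n = 1 := by
  rcases neg_one_pow_eq_or ℤ (Nat.digits 2 n).sum with h | h <;> simp [t, h]

lemma abs_t (n : ℕ) : |t n| = 1 := abs_neg_one_pow _

lemma t_ne_zero (n : ℕ) : t n ≠ 0 := pow_ne_zero _ (by norm_num)

lemma h_two_mul_add_three (n : ℕ) : h (2 * n + 3) = -t (n + 1) * h (2 * n) := by
  have h3 : h (2 * n + 3) = t (2 * (n + 1) + 1) * h (2 * n + 2) + h (2 * n + 1) := rfl
  have h2 : h (2 * n + 2) = t (2 * (n + 1)) * h (2 * n + 1) + h (2 * n) := rfl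
  rw [h3, h2, t_two_mul_add_one, t_two_mul]
  linear_combination (-h (2 * n + 1)) * t_mul_self (n + 1)

lemma h_two_mul_add_four (n : ℕ) :
    h (2 * n + 4) = h (2 * n + 2) - t (n + 1) * t (n + 2) * h (2 * n) := by
  have h4 : h (2 * n + 4) = t (2 * (n + 2)) * h (2 * n + 3) + h (2 * n + 2) := rfl
  rw [h4, t_two_mul, h_two_mul_add_three]
  ring

lemma h_four_mul_add_four_le (m : ℕ) (hm : h (4 * m) ≤ 0) :
    h (4 * m + 4) ≤ h (4 * m + 2) - h (4 * m) := by
  have key := h_two_mul_add_four (2 * m)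
  rw [show 2 * m + 2 = 2 * (m + 1) from rfl, t_two_mul_add_one, t_two_mul,
    show 2 * (2 * m) = 4 * m by ring] at key
  have hc : |t m * t (m + 1) * h (4 * m)| = -h (4 * m) := by
    rw [abs_mul, abs_mul, abs_t, abs_t, one_mul, one_mul, abs_of_nonpos hm]
  linarith [le_abs_self (t m * t (m + 1) * h (4 * m))]

lemma h_four_mul_add_six (m : ℕ) : h (4 * m + 6) = h (4 * m + 4) + h (4 * m + 2) := by
  have key := h_two_mul_add_four (2 * m + 1)
  rw [show 2 * m + 1 + 1 = 2 * (m + 1) from rfl, show 2 * m + 1 + 2 = 2 * (m + 1) + 1 from rfl,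
    t_two_mul_add_one, t_two_mul, show 2 * (2 * m + 1) + 4 = 4 * m + 6 by ring, show 2 * (2 * m + 1) + 2 = 4 * m + 4 by ring,
    show 2 * (2 * m + 1) = 4 * m + 2 by ring] at key
  rw [key]
  linear_combination h (4 * m + 2) * t_mul_self (m + 1)

lemma h_four_mul_add_two_lt_and_nonpos (m : ℕ) : h (4 * m + 2) < h (4 * m) ∧ h (4 * m) ≤ 0 := by
  induction m with
  | zero => decide
  | succ m ih =>
    obtain ⟨hba, ha⟩ := ih
    have ha' := h_four_mul_add_four_le m ha
    have hb' := h_four_mul_add_six m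
    show h (4 * m + 6) < h (4 * m + 4) ∧ h (4 * m + 4) ≤ 0
    constructor <;> linarith

lemma h_two_mul_neg (n : ℕ) (hn : 1 ≤ n) : h (2 * n) < 0 := by
  obtain ⟨m, rfl | rfl⟩ : ∃ m, n = 2 * m + 1 ∨ n = 2 * m + 2 := ⟨(n - 1) / 2, by omega⟩
  · obtain ⟨hba, ha⟩ := h_four_mul_add_two_lt_and_nonpos m
    rw [show 2 * (2 * m + 1) = 4 * m + 2 by ring]
    linarith
  · obtain ⟨hba, ha⟩ := h_four_mul_add_two_lt_and_nonpos m
    have := h_four_mul_add_four_le m ha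
    rw [show 2 * (2 * m + 2) = 4 * m + 4 by ring]
    linarith

theorem stmt4 : ∀ n : ℕ, 5 ≤ n → h n ≠ 0 := by
  intro n hn
  obtain ⟨k, rfl | rfl⟩ : ∃ k, n = 2 * k ∨ n = 2 * k + 3 :=
    ⟨if n % 2 = 0 then n / 2 else (n - 3) / 2, by split_ifs <;> omega⟩
  · exact (h_two_mul_neg k (by omega)).ne
  · rw [h_two_mul_add_three]
    exact mul_ne_zero (neg_ne_zero.mpr (t_ne_zero _)) (h_two_mul_neg k (by omega)).ne
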